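/- Let G be a finite connected simple graph with at least one edge and let f be an isogeometric product set-labeling of G. Then f is a uniform product set-labeling (all edge labels have the same cardinality) if and only if either (i) all vertex labels of G have the same cardinality, or (ii) G is bipartite with a bipartition (X, Y) such that the cardinality of the vertex labels is constant on X and constant on Y. -/

import Mathlib

/-!
The product of two geometric progressions of ratio `r ≥ 2` and lengths `m, n` is the geometric
progression of length `m + n - 1`, so `f` is uniform exactly when `|f u| + |f v|` is the same for
all edges `uv`. If the sum along every edge is `s`, then along any walk the label sizes alternate
between `k` and `s - k`: either these agree, or the vertices of size `k` and the others form a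
bipartition of the connected graph.
-/

open Pointwise

/-- A finite set of positive integers is a geometric progression with common ratio `r`
(for some integer first term `a > 0`). -/
def IsGeomProgWith (A : Finset ℕ) (r : ℕ) : Prop :=
  ∃ a : ℕ, 0 < a ∧ A = (Finset.range A.card).image (fun i => a * r ^ i)

def geomProg (a r n : ℕ) : Finset ℕ := (Finset.range n).image fun i => a * r ^ i

lemma card_geomProg {a r : ℕ} (ha : 0 < a) (hr : 2 ≤ r) (n : ℕ) :
    (geomProg a r n).card = n := by
  have hinj : Function.Injective fun i => a * r ^ i :=
    (mul_right_injective₀ ha.ne').comp (Nat.pow_right_injective hr)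
  rw [geomProg, Finset.card_image_of_injective _ hinj, Finset.card_range]

lemma geomProg_mul_geomProg (a b r : ℕ) {m n : ℕ} (hm : 0 < m) (hn : 0 < n) :
    geomProg a r m * geomProg b r n = geomProg (a * b) r (m + n - 1) := by
  ext x
  simp only [geomProg, Finset.mem_mul, Finset.mem_image, Finset.mem_range]
  constructor
  · rintro ⟨_, ⟨i, hi, rfl⟩, _, ⟨j, hj, rfl⟩, rfl⟩
    exact ⟨i + j, by omega, by rw [mul_mul_mul_comm, ← pow_add]⟩
  · rintro ⟨k, hk, rfl⟩
    -- split the exponent `k < m + n - 1` as `i + j` with `i < m`, `j < n`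
    refine ⟨a * r ^ min k (m - 1), ⟨_, by omega, rfl⟩,
      b * r ^ (k - min k (m - 1)), ⟨_, by omega, rfl⟩, ?_⟩
    rw [mul_mul_mul_comm, ← pow_add, Nat.add_sub_cancel' (min_le_left _ _)]

lemma IsGeomProgWith.card_mul_add_one {A B : Finset ℕ} {r : ℕ} (hA : IsGeomProgWith A r)
    (hB : IsGeomProgWith B r) (hr : 2 ≤ r) (hAne : A.Nonempty) (hBne : B.Nonempty) :
    (A * B).card + 1 = A.card + B.card := by
  obtain ⟨a, ha, hA : A = geomProg a r A.card⟩ := hA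
  obtain ⟨b, hb, hB : B = geomProg b r B.card⟩ := hB
  have hm := hAne.card_pos
  have hn := hBne.card_pos
  calc (A * B).card + 1 = (geomProg a r A.card * geomProg b r B.card).card + 1 := by
        rw [← hA, ← hB]
    _ = A.card + B.card := by
        rw [geomProg_mul_geomProg a b r hm hn, card_geomProg (Nat.mul_pos ha hb) hr]
        omega

namespace SimpleGraph

variable {V M : Type*} {G : SimpleGraph V}

lemma Walk.eq_or_add_eq_of_forall_adj_add_eq [AddCancelCommMonoid M] {d : V → M} {s : M}
    (hd : ∀ u v, G.Adj u v → d u + d v = s) {u v : V} (p : G.Walk u v) :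
    d v = d u ∨ d u + d v = s := by
  induction p with
  | nil => exact Or.inl rfl
  | @cons x y z hxy _ ih =>
    rcases ih with hzy | hyz
    · exact Or.inr (hzy ▸ hd x y hxy)
    · exact Or.inl (add_left_cancel (hyz.trans (add_comm (d x) (d y) ▸ hd x y hxy).symm))

lemma Connected.const_or_bipartite_of_forall_adj_add_eq [AddCancelCommMonoid M]
    (hG : G.Connected) {d : V → M} {s : M} (hd : ∀ u v, G.Adj u v → d u + d v = s) :
    (∀ u v, d u = d v) ∨
      ∃ X : Set V, (∀ u v, G.Adj u v → (u ∈ X ↔ v ∉ X)) ∧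
        (∀ u ∈ X, ∀ v ∈ X, d u = d v) ∧ (∀ u ∉ X, ∀ v ∉ X, d u = d v) := by
  obtain ⟨u₀⟩ := hG.nonempty
  have hsize : ∀ v, d v = d u₀ ∨ d u₀ + d v = s := fun v =>
    (hG u₀ v).elim (Walk.eq_or_add_eq_of_forall_adj_add_eq hd)
  by_cases hs : d u₀ + d u₀ = s
  · have hconst : ∀ v, d v = d u₀ := fun v =>
      (hsize v).elim id fun h => add_left_cancel (h.trans hs.symm)
    exact Or.inl fun u v => (hconst u).trans (hconst v).symm
  · refine Or.inr ⟨{v | d v = d u₀}, fun u v huv => ⟨fun hu hv => hs ?_, fun hv => ?_⟩,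
      fun u hu v hv => hu.trans hv.symm, fun u hu v hv => ?_⟩
    · exact (congrArg₂ (· + ·) hu hv).symm.trans (hd u v huv)
    · have hv' := (hsize v).resolve_left hv
      exact add_right_cancel ((hd u v huv).trans hv'.symm)
    · exact add_left_cancel (((hsize u).resolve_left hu).trans ((hsize v).resolve_left hv).symm)

lemma exists_forall_adj_add_eq_of_bipartite [AddCommMonoid M] (hedge : ∃ u v, G.Adj u v)
    {d : V → M} {X : Set V} (hX : ∀ u v, G.Adj u v → (u ∈ X ↔ v ∉ X))
    (hdX : ∀ u ∈ X, ∀ v ∈ X, d u = d v) (hdXc : ∀ u ∉ X, ∀ v ∉ X, d u = d v) :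
    ∃ s, ∀ u v, G.Adj u v → d u + d v = s := by
  obtain ⟨a, b, ha, hb⟩ : ∃ a b, a ∈ X ∧ b ∉ X := by
    obtain ⟨u₀, v₀, h₀⟩ := hedge
    by_cases hu₀ : u₀ ∈ X
    · exact ⟨u₀, v₀, hu₀, (hX u₀ v₀ h₀).mp hu₀⟩
    · exact ⟨v₀, u₀, not_not.mp (mt (hX u₀ v₀ h₀).mpr hu₀), hu₀⟩
  refine ⟨d a + d b, fun u v huv => ?_⟩
  by_cases hu : u ∈ X
  · rw [hdX u hu a ha, hdXc v ((hX u v huv).mp hu) b hb]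
  · have hv : v ∈ X := not_not.mp (mt (hX u v huv).mpr hu)
    rw [add_comm, hdX v hv a ha, hdXc u hu b hb]

theorem Connected.exists_forall_adj_add_eq_iff [AddCancelCommMonoid M] (hG : G.Connected)
    (hedge : ∃ u v, G.Adj u v) (d : V → M) :
    (∃ s, ∀ u v, G.Adj u v → d u + d v = s) ↔
      ((∀ u v, d u = d v) ∨
        ∃ X : Set V, (∀ u v, G.Adj u v → (u ∈ X ↔ v ∉ X)) ∧
          (∀ u ∈ X, ∀ v ∈ X, d u = d v) ∧ (∀ u ∉ X, ∀ v ∉ X, d u = d v)) := by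
  refine ⟨fun ⟨s, hd⟩ => hG.const_or_bipartite_of_forall_adj_add_eq hd, ?_⟩
  rintro (hconst | ⟨X, hX, hdX, hdXc⟩)
  · obtain ⟨u₀, v₀, -⟩ := hedge
    exact ⟨d u₀ + d v₀, fun u v _ => by rw [hconst u u₀, hconst v v₀]⟩
  · exact exists_forall_adj_add_eq_of_bipartite hedge hX hdX hdXc

end SimpleGraph

theorem isogeometric_uniform_iff_general {V : Type*}
    (G : SimpleGraph V) (hconn : G.Connected) (hedge : ∃ u v, G.Adj u v)
    (f : V → Finset ℕ) (r : ℕ) (hr : 2 ≤ r)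
    (hne : ∀ v, (f v).Nonempty)
    (hiso : ∀ v, IsGeomProgWith (f v) r) :
    (∃ c : ℕ, ∀ u v, G.Adj u v → (f u * f v).card = c) ↔
      ((∀ u v : V, (f u).card = (f v).card) ∨
        (∃ X : Set V, (∀ u v, G.Adj u v → (u ∈ X ↔ v ∉ X)) ∧
          (∀ u ∈ X, ∀ v ∈ X, (f u).card = (f v).card) ∧
          (∀ u ∉ X, ∀ v ∉ X, (f u).card = (f v).card))) := by
  have hcard : ∀ u v, (f u * f v).card + 1 = (f u).card + (f v).card := fun u v =>
    (hiso u).card_mul_add_one (hiso v) hr (hne u) (hne v)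
  refine Iff.trans ?_ (hconn.exists_forall_adj_add_eq_iff hedge fun v => (f v).card)
  constructor
  · rintro ⟨c, hc⟩
    exact ⟨c + 1, fun u v huv => by rw [← hcard, hc u v huv]⟩
  · rintro ⟨s, hs⟩
    exact ⟨s - 1, fun u v huv => by have := hcard u v; have := hs u v huv; omega⟩

/-- Let `G` be a finite connected simple graph with at least one edge
and `f` an isogeometric product set-labeling of `G` (injective with nonempty labels, all
labels geometric progressions with the same common ratio `r ≥ 2`). Then `f` is uniform
(all edge labels have the same cardinality) iff either all vertex labels have the same
cardinality, or `G` is bipartite with a bipartition `(X, Xᶜ)` on each side of which the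
cardinality of the vertex labels is constant. -/
theorem isogeometric_uniform_iff {V : Type*} [Fintype V]
    (G : SimpleGraph V) (hconn : G.Connected) (hedge : ∃ u v, G.Adj u v)
    (f : V → Finset ℕ) (r : ℕ) (hr : 2 ≤ r)
    (hinj : Function.Injective f)
    (hne : ∀ v, (f v).Nonempty)
    (hiso : ∀ v, IsGeomProgWith (f v) r) :
    (∃ c : ℕ, ∀ u v, G.Adj u v → (f u * f v).card = c) ↔
      ((∀ u v : V, (f u).card = (f v).card) ∨
        (∃ X : Set V, (∀ u v, G.Adj u v → (u ∈ X ↔ v ∉ X)) ∧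
          (∀ u ∈ X, ∀ v ∈ X, (f u).card = (f v).card) ∧
          (∀ u ∉ X, ∀ v ∉ X, (f u).card = (f v).card))) :=
  isogeometric_uniform_iff_general G hconn hedge f r hr hne hiso
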